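/- arXiv:1904.04112 — 2 statements merged into one kernel-verified Lean document; each statement's English description precedes it below -/
import Mathlib

section
/- Let (S, Σ, μ) be a measure space, let {f_n} be a sequence of measurable functions uniformly bounded in L^∞(S, μ), and let {g_n} converge in L^1(S, μ) to a nonnegative limit g. Then limsup_{n→∞} ∫_S f_n g_n dμ ≤ ∫_S (limsup_{n→∞} f_n) g dμ. -/
/-!
Since `|f n| ≤ C` a.e., replacing `gs n` by `g` changes `∫ f n * gs n` by at most
`C * ∫ |gs n - g| → 0`, so it suffices to bound `limsup ∫ f n * g`. The functions `f n * g` are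
dominated by `C * |g|`, and reverse Fatou follows from dominated convergence applied to the tail
suprema `⨆ k, F (k + n)`, which decrease to `limsup F` and dominate every later `F m`. Finally
`g ≥ 0` lets `g x` be pulled out of the pointwise limsup.
-/

open MeasureTheory Filter Topology

section RealSequences

variable {M : ℝ}

lemma bddAbove_range_of_abs_le {ι : Type*} {v : ι → ℝ} (hv : ∀ i, |v i| ≤ M) :
    BddAbove (Set.range v) :=
  ⟨M, Set.forall_mem_range.2 fun i => (abs_le.1 (hv i)).2⟩

lemma abs_ciSup_le {ι : Type*} [Nonempty ι] {v : ι → ℝ} (hv : ∀ i, |v i| ≤ M) :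
    |⨆ i, v i| ≤ M :=
  abs_le.2 ⟨(abs_le.1 (hv (Classical.arbitrary ι))).1.trans
      (le_ciSup (bddAbove_range_of_abs_le hv) _),
    ciSup_le fun i => (abs_le.1 (hv i)).2⟩

variable {u : ℕ → ℝ}

lemma le_iSup_nat_add (hu : ∀ n, |u n| ≤ M) {m n : ℕ} (hnm : n ≤ m) :
    u m ≤ ⨆ k, u (k + n) := by
  obtain ⟨k, rfl⟩ := Nat.exists_eq_add_of_le' hnm
  exact le_ciSup (bddAbove_range_of_abs_le fun k => hu (k + n)) k

lemma tendsto_iSup_nat_add_limsup (hu : ∀ n, |u n| ≤ M) :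
    Tendsto (fun n => ⨆ k, u (k + n)) atTop (𝓝 (limsup u atTop)) := by
  set H : ℕ → ℝ := fun n => ⨆ k, u (k + n)
  have hH_anti : Antitone H := antitone_nat_of_succ_le fun n =>
    ciSup_le fun k => le_iSup_nat_add hu (by omega : n ≤ k + (n + 1))
  have hH_bdd : BddBelow (Set.range H) :=
    ⟨-M, Set.forall_mem_range.2 fun n => (abs_le.1 (abs_ciSup_le fun k => hu (k + n))).1⟩
  have hH_inf : ⨅ n, H n = limsup u atTop := by
    apply le_antisymm
    · refine le_of_forall_lt_imp_le_of_dense fun c hc => ?_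
      refine le_limsup_of_frequently_le (frequently_atTop.2 fun n => ?_)
        (isBoundedUnder_of ⟨M, fun m => (abs_le.1 (hu m)).2⟩)
      obtain ⟨k, hk⟩ := exists_lt_of_lt_ciSup (hc.trans_le (ciInf_le hH_bdd n))
      exact ⟨k + n, Nat.le_add_left n k, hk.le⟩
    · exact le_ciInf fun n => limsup_le_of_le
        (isCoboundedUnder_le_of_le atTop fun m => (abs_le.1 (hu m)).1)
        (eventually_atTop.2 ⟨n, fun m hm => le_iSup_nat_add hu hm⟩)
  exact hH_inf ▸ tendsto_atTop_ciInf hH_anti hH_bdd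

end RealSequences

lemma limsup_mul_const_of_nonneg {ι : Type*} {l : Filter ι} [l.NeBot] {v : ι → ℝ} {c : ℝ}
    (hc : 0 ≤ c) (hv : IsBoundedUnder (· ≤ ·) l v) (hv' : IsCoboundedUnder (· ≤ ·) l v) :
    limsup (fun i => v i * c) l = limsup v l * c :=
  (Monotone.map_limsup_of_continuousAt (fun _ _ h => mul_le_mul_of_nonneg_right h hc) v
    (continuous_mul_const c).continuousAt hv hv').symm

lemma limsup_le_limsup_of_tendsto_sub {ι : Type*} {l : Filter ι} [l.NeBot] {a b : ι → ℝ}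
    (hb : IsBoundedUnder (· ≤ ·) l fun i => |b i|) (hab : Tendsto (a - b) l (𝓝 0)) :
    limsup a l ≤ limsup b l := by
  obtain ⟨hb_le, hb_ge⟩ := isBoundedUnder_le_abs.1 hb
  calc limsup a l = limsup (b + (a - b)) l := by rw [add_sub_cancel]
    _ ≤ limsup b l + limsup (a - b) l :=
      limsup_add_le hb_ge hb_le hab.isCoboundedUnder_le hab.isBoundedUnder_le
    _ = limsup b l := by rw [hab.limsup_eq, add_zero]

lemma abs_mul_le_mul_abs {a b C : ℝ} (ha : |a| ≤ C) : |a * b| ≤ C * |b| := by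
  rw [abs_mul]
  exact mul_le_mul_of_nonneg_right ha (abs_nonneg b)

section Integrals

variable {α : Type*} [MeasurableSpace α] {μ : Measure α}

lemma abs_integral_mul_le {f u : α → ℝ} {C : ℝ} (hf : ∀ᵐ x ∂μ, |f x| ≤ C)
    (hu : Integrable u μ) : |∫ x, f x * u x ∂μ| ≤ C * ∫ x, |u x| ∂μ := by
  rw [← integral_const_mul]
  exact norm_integral_le_of_norm_le (f := fun x => f x * u x) (hu.abs.const_mul C)
    (hf.mono fun x hx => abs_mul_le_mul_abs hx)

lemma abs_integral_mul_sub_integral_mul_le {f u v : α → ℝ} {C : ℝ}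
    (hf_meas : AEStronglyMeasurable f μ) (hf : ∀ᵐ x ∂μ, |f x| ≤ C)
    (hu : Integrable u μ) (hv : Integrable v μ) :
    |∫ x, f x * u x ∂μ - ∫ x, f x * v x ∂μ| ≤ C * ∫ x, |u x - v x| ∂μ := by
  rw [← integral_sub (hu.bdd_mul hf_meas hf) (hv.bdd_mul hf_meas hf)]
  simpa only [Pi.sub_apply, mul_sub] using abs_integral_mul_le hf (hu.sub hv)

theorem limsup_integral_le_integral_limsup {F : ℕ → α → ℝ} {G : α → ℝ}
    (hF : ∀ n, AEMeasurable (F n) μ) (hG : Integrable G μ)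
    (hFG : ∀ n, ∀ᵐ x ∂μ, |F n x| ≤ G x) :
    limsup (fun n => ∫ x, F n x ∂μ) atTop ≤ ∫ x, limsup (fun n => F n x) atTop ∂μ := by
  have hFG' : ∀ᵐ x ∂μ, ∀ n, |F n x| ≤ G x := ae_all_iff.2 hFG
  have hF_int : ∀ n, Integrable (F n) μ := fun n =>
    hG.mono' (hF n).aestronglyMeasurable (hFG n)
  set H : ℕ → α → ℝ := fun n x => ⨆ k, F (k + n) x
  have hH_meas : ∀ n, AEStronglyMeasurable (H n) μ := fun n =>
    (AEMeasurable.iSup fun k => hF (k + n)).aestronglyMeasurable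
  have hH_bound : ∀ n, ∀ᵐ x ∂μ, ‖H n x‖ ≤ G x := fun n => by
    filter_upwards [hFG'] with x hx using abs_ciSup_le fun k => hx (k + n)
  have hH_tendsto : Tendsto (fun n => ∫ x, H n x ∂μ) atTop
      (𝓝 (∫ x, limsup (fun n => F n x) atTop ∂μ)) :=
    tendsto_integral_of_dominated_convergence G hH_meas hG hH_bound (by
      filter_upwards [hFG'] with x hx using tendsto_iSup_nat_add_limsup hx)
  refine ge_of_tendsto' hH_tendsto fun n => limsup_le_of_le ?_ ?_
  · refine isCoboundedUnder_le_of_le atTop (x := -∫ x, G x ∂μ) fun m => ?_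
    rw [← integral_neg]
    exact integral_mono_ae hG.neg (hF_int m) ((hFG m).mono fun x hx => neg_le_of_abs_le hx)
  · refine eventually_atTop.2 ⟨n, fun m hm => integral_mono_ae (hF_int m)
      (hG.mono' (hH_meas n) (hH_bound n)) ?_⟩
    filter_upwards [hFG'] with x hx using le_iSup_nat_add hx hm

end Integrals

/-- Reverse Fatou's Lemma for products. -/
theorem reverse_fatou_products {S : Type*} [MeasurableSpace S] (μ : Measure S)
    (f : ℕ → S → ℝ) (gs : ℕ → S → ℝ) (g : S → ℝ) (C : ℝ)
    (hfmeas : ∀ n, Measurable (f n))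
    (hfbd : ∀ n, ∀ᵐ x ∂μ, |f n x| ≤ C)
    (hgsint : ∀ n, Integrable (gs n) μ)
    (hgint : Integrable g μ)
    (hgpos : ∀ᵐ x ∂μ, 0 ≤ g x)
    (hconv : Tendsto (fun n => ∫ x, |gs n x - g x| ∂μ) atTop (𝓝 0)) :
    limsup (fun n => ∫ x, f n x * gs n x ∂μ) atTop
      ≤ ∫ x, (limsup (fun n => f n x) atTop) * g x ∂μ := by
  have hf : ∀ᵐ x ∂μ, ∀ n, |f n x| ≤ C := ae_all_iff.2 hfbd
  calc limsup (fun n => ∫ x, f n x * gs n x ∂μ) atTop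
      ≤ limsup (fun n => ∫ x, f n x * g x ∂μ) atTop :=
        limsup_le_limsup_of_tendsto_sub
          (isBoundedUnder_of ⟨C * ∫ x, |g x| ∂μ, fun n => abs_integral_mul_le (hfbd n) hgint⟩)
          (squeeze_zero_norm (fun n => abs_integral_mul_sub_integral_mul_le
            (hfmeas n).aestronglyMeasurable (hfbd n) (hgsint n) hgint)
            (by simpa using hconv.const_mul C))
    _ ≤ ∫ x, limsup (fun n => f n x * g x) atTop ∂μ :=
        limsup_integral_le_integral_limsup
          (fun n => (hfmeas n).aemeasurable.mul hgint.aemeasurable)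
          (hgint.abs.const_mul C) fun n => (hfbd n).mono fun x hx => abs_mul_le_mul_abs hx
    _ = ∫ x, limsup (fun n => f n x) atTop * g x ∂μ := by
        refine integral_congr_ae ?_
        filter_upwards [hf, hgpos] with x hx hgx
        exact limsup_mul_const_of_nonneg hgx
          (isBoundedUnder_of ⟨C, fun n => (abs_le.1 (hx n)).2⟩)
          (isCoboundedUnder_le_of_le atTop fun n => (abs_le.1 (hx n)).1)
end

section
/- Let g : (0,∞) → ℝ be C¹ with g(1) = 0 and g'(s) > 0 for all s > 0, and let ψ : [0,∞) → ℝ be C¹ on [0,∞), C² on (0,∞), with ψ(1) = 0, ψ(s) > 0 for s ≠ 1, ψ''(s) > 0 for s > 0 with s ≠ 1, and ψ'(s) → ∞ as s → ∞. Then for every ε > 0 there exists C_ε > 0 such that ψ(s) ≤ C_ε · s · g(s) · ψ'(s) for all s ≥ ε. -/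
/-!
The derivative `ψ'` is increasing on `(0, ∞)`, so `ψ` is convex there, and `ψ'(1) = 0` because
`ψ` is minimal at `1`. The tangent to `ψ` at `s` lies below `ψ(1) = 0`, which gives
`ψ(s) ≤ (s - 1) ψ'(s)`, a nonnegative quantity. Write `g(s) = (s - 1) q(s)` with `q = dslope g 1`
the difference quotient of `g` at `1`: `s q(s)` is continuous and positive on `(0, ∞)`, and at
least `g(2) - g(1)` for `s ≥ 2`, so it is bounded below by some `c > 0` on `[ε, ∞)`.
Then `(s - 1) ψ'(s) ≤ c⁻¹ (s - 1) ψ'(s) · s q(s) = c⁻¹ s g(s) ψ'(s)`.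
-/

open Filter Topology Set

theorem strictMonoOn_Ioi_of_deriv_pos_of_ne {f : ℝ → ℝ} {a c : ℝ} (hac : a < c)
    (hf : ContinuousOn f (Ioi a)) (hf' : ∀ x > a, x ≠ c → 0 < deriv f x) :
    StrictMonoOn f (Ioi a) := by
  rw [← Ioc_union_Ici_eq_Ioi hac]
  refine StrictMonoOn.union ?_ ?_ (isGreatest_Ioc hac) isLeast_Ici
  · refine strictMonoOn_of_deriv_pos (convex_Ioc a c) (hf.mono Ioc_subset_Ioi_self) fun x hx => ?_
    rw [interior_Ioc] at hx
    exact hf' x hx.1 hx.2.ne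
  · refine strictMonoOn_of_deriv_pos (convex_Ici c) (hf.mono (Ici_subset_Ioi.2 hac)) fun x hx => ?_
    rw [interior_Ici] at hx
    exact hf' x (hac.trans hx) hx.ne'

theorem ConvexOn.add_deriv_mul_sub_le {S : Set ℝ} {f : ℝ → ℝ} (hf : ConvexOn ℝ S f) {x y : ℝ}
    (hx : x ∈ S) (hy : y ∈ S) (hfd : DifferentiableAt ℝ f x) :
    f x + deriv f x * (y - x) ≤ f y := by
  rcases lt_trichotomy x y with hxy | rfl | hxy
  · have h := hf.deriv_le_slope hx hy hxy hfd
    rw [slope_def_field, le_div_iff₀ (sub_pos.2 hxy)] at h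
    linarith
  · simp
  · have h := hf.slope_le_deriv hy hx hxy hfd
    rw [slope_def_field, div_le_iff₀ (sub_pos.2 hxy)] at h
    linarith

theorem MonotoneOn.sub_mul_apply_nonneg {α : Type*} [Ring α] [LinearOrder α]
    [IsStrictOrderedRing α] {f : α → α} {S : Set α} (hf : MonotoneOn f S) {a x : α}
    (ha : a ∈ S) (hx : x ∈ S) (hfa : f a = 0) : 0 ≤ (x - a) * f x := by
  rcases le_total x a with hxa | hax
  · exact mul_nonneg_of_nonpos_of_nonpos (sub_nonpos.2 hxa) (hfa ▸ hf hx ha hxa)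
  · exact mul_nonneg (sub_nonneg.2 hax) (hfa ▸ hf ha hx hax)

theorem StrictMonoOn.dslope_pos {g : ℝ → ℝ} {S : Set ℝ} (hg : StrictMonoOn g S) {a s : ℝ}
    (ha : a ∈ S) (hs : s ∈ S) (hga : 0 < deriv g a) : 0 < dslope g a s := by
  rcases eq_or_ne s a with rfl | hsa
  · rwa [dslope_same]
  · rw [dslope_of_ne g hsa]
    exact hg.slope_pos ha hs hsa.symm

theorem exists_pos_le_mul_dslope_of_deriv_pos {g : ℝ → ℝ} (hg : ∀ x > 0, 0 < deriv g x)
    {a ε : ℝ} (ha : 0 < a) (hε : 0 < ε) : ∃ c > 0, ∀ s ≥ ε, c ≤ s * dslope g a s := by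
  have hcont : ContinuousOn g (Ioi 0) := fun x hx =>
    (differentiableAt_of_deriv_ne_zero (hg x hx).ne').continuousAt.continuousWithinAt
  have hmono : StrictMonoOn g (Ioi 0) :=
    strictMonoOn_of_deriv_pos (convex_Ioi 0) hcont (by rwa [interior_Ioi])
  have hdslope_pos : ∀ s > 0, 0 < dslope g a s := fun s hs => hmono.dslope_pos ha hs (hg a ha)
  have hdslope_cont : ContinuousOn (dslope g a) (Ioi 0) :=
    (continuousOn_dslope (Ioi_mem_nhds ha)).2
      ⟨hcont, differentiableAt_of_deriv_ne_zero (hg a ha).ne'⟩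
  obtain ⟨c, hc, hc_le⟩ := (isCompact_Icc (a := ε) (b := 2 * a)).exists_forall_le'
    ((continuousOn_id.mul hdslope_cont).mono fun s hs => hε.trans_le hs.1)
    fun s hs => mul_pos (hε.trans_le hs.1) (hdslope_pos s (hε.trans_le hs.1))
  have h2a : 0 < g (2 * a) - g a := sub_pos.2 (hmono ha (by simp [ha]) (by linarith))
  refine ⟨min c (g (2 * a) - g a), lt_min hc h2a, fun s hs => ?_⟩
  rcases le_total s (2 * a) with hs2a | hs2a
  · exact (min_le_left _ _).trans (hc_le s ⟨hs, hs2a⟩)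
  · have hs0 : 0 < s := by linarith
    calc min c (g (2 * a) - g a) ≤ g s - g a := (min_le_right _ _).trans
          (sub_le_sub_right (hmono.monotoneOn (by simp [ha]) hs0 hs2a) _)
      _ = (s - a) * dslope g a s := (sub_smul_dslope g a s).symm
      _ ≤ s * dslope g a s :=
          mul_le_mul_of_nonneg_right (by linarith) (hdslope_pos s hs0).le

theorem entropy_le_hellinger_production_general (g ψ : ℝ → ℝ)
    (hg1 : g 1 = 0)
    (hg' : ∀ s > (0:ℝ), 0 < deriv g s)
    (hψC2 : ContDiffOn ℝ 2 ψ (Ioi 0))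
    (hψ1 : ψ 1 = 0)
    (hψpos : ∀ s ≥ (0:ℝ), s ≠ 1 → 0 < ψ s)
    (hψ'' : ∀ s > (0:ℝ), s ≠ 1 → 0 < deriv (deriv ψ) s) :
    ∀ ε > (0:ℝ), ∃ Cε > (0:ℝ), ∀ s ≥ ε, ψ s ≤ Cε * (s * g s * deriv ψ s) := by
  intro ε hε
  have hψd : DifferentiableOn ℝ ψ (Ioi 0) := hψC2.differentiableOn (by norm_num)
  have hψ'mono : MonotoneOn (deriv ψ) (Ioi 0) := (strictMonoOn_Ioi_of_deriv_pos_of_ne one_pos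
    (hψC2.continuousOn_deriv_of_isOpen isOpen_Ioi (by norm_num)) hψ'').monotoneOn
  have hψconvex : ConvexOn ℝ (Ioi 0) ψ := MonotoneOn.convexOn_of_deriv (convex_Ioi 0)
    hψd.continuousOn (by rwa [interior_Ioi]) (by rwa [interior_Ioi])
  have hψ'1 : deriv ψ 1 = 0 := IsLocalMin.deriv_eq_zero <| by
    filter_upwards [Ioi_mem_nhds one_pos] with t ht
    rcases eq_or_ne t 1 with rfl | ht1
    · rfl
    · exact hψ1 ▸ (hψpos t ht.le ht1).le
  obtain ⟨c, hc, hc_le⟩ := exists_pos_le_mul_dslope_of_deriv_pos hg' one_pos hε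
  refine ⟨c⁻¹, inv_pos.2 hc, fun s hs => ?_⟩
  have hs0 : 0 < s := hε.trans_le hs
  have hsign : 0 ≤ (s - 1) * deriv ψ s := hψ'mono.sub_mul_apply_nonneg (mem_Ioi.2 one_pos) hs0 hψ'1
  have hgs : g s = (s - 1) * dslope g 1 s := by simpa [hg1] using (sub_smul_dslope g 1 s).symm
  calc ψ s ≤ (s - 1) * deriv ψ s := by
        have := hψconvex.add_deriv_mul_sub_le hs0 (mem_Ioi.2 one_pos)
          (hψd.differentiableAt (Ioi_mem_nhds hs0))
        linarith
    _ ≤ c⁻¹ * ((s - 1) * deriv ψ s * (s * dslope g 1 s)) := by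
        rw [le_inv_mul_iff₀ hc, mul_comm c]
        exact mul_le_mul_of_nonneg_left (hc_le s hs) hsign
    _ = c⁻¹ * (s * g s * deriv ψ s) := by rw [hgs]; ring

/-- Lemma 4.3: the entropy integrand is controlled by the Hellinger
entropy-production integrand away from zero. -/
theorem entropy_le_hellinger_production (g ψ : ℝ → ℝ)
    (hg : ContDiffOn ℝ 1 g (Ioi 0))
    (hg1 : g 1 = 0)
    (hg' : ∀ s > (0:ℝ), 0 < deriv g s)
    (hψC1 : ContDiffOn ℝ 1 ψ (Ici 0))
    (hψC2 : ContDiffOn ℝ 2 ψ (Ioi 0))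
    (hψ1 : ψ 1 = 0)
    (hψpos : ∀ s ≥ (0:ℝ), s ≠ 1 → 0 < ψ s)
    (hψ'' : ∀ s > (0:ℝ), s ≠ 1 → 0 < deriv (deriv ψ) s)
    (hψ'top : Tendsto (deriv ψ) atTop atTop) :
    ∀ ε > (0:ℝ), ∃ Cε > (0:ℝ), ∀ s ≥ ε, ψ s ≤ Cε * (s * g s * deriv ψ s) :=
  entropy_le_hellinger_production_general g ψ hg1 hg' hψC2 hψ1 hψpos hψ''
end
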